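/- The set $\mathcal{F} = \{g = [G] \in \mathrm{PSL}(2,\mathbb{R}) : G = \begin{pmatrix} a & b \\ c & d \end{pmatrix} \in \mathrm{SL}(2,\mathbb{R}),\ 2|ac+bd| < c^2+d^2,\ (ac+bd)^2 + 1 > (c^2+d^2)^2\}$ is a fundamental domain in $\mathrm{PSL}(2,\mathbb{R})$ for the modular group $\mathrm{PSL}(2,\mathbb{Z})$ acting by left multiplication. -/

import Mathlib

open Matrix Complex Set

abbrev SL2R := Matrix.SpecialLinearGroup (Fin 2) ℝ

abbrev PSL2R := SL2R ⧸ Subgroup.center SL2R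

instance : TopologicalSpace SL2R :=
  TopologicalSpace.induced (fun G : SL2R => (G : Matrix (Fin 2) (Fin 2) ℝ)) inferInstance

instance : TopologicalSpace PSL2R := instTopologicalSpaceQuotient

noncomputable def Amat (t : ℝ) : SL2R :=
  ⟨!![Real.exp (t/2), 0; 0, Real.exp (-(t/2))], by
    rw [Matrix.det_fin_two_of, ← Real.exp_add]
    simp⟩

noncomputable def Bmat (t : ℝ) : SL2R :=
  ⟨!![1, t; 0, 1], by rw [Matrix.det_fin_two_of]; ring⟩

noncomputable def Dmat (t : ℝ) : SL2R :=
  ⟨!![Real.cos (t/2), Real.sin (t/2); -Real.sin (t/2), Real.cos (t/2)], by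
    rw [Matrix.det_fin_two_of]
    nlinarith [Real.sin_sq_add_cos_sq (t/2)]⟩

noncomputable def aP (t : ℝ) : PSL2R := QuotientGroup.mk (Amat t)
noncomputable def bP (t : ℝ) : PSL2R := QuotientGroup.mk (Bmat t)
noncomputable def dP (t : ℝ) : PSL2R := QuotientGroup.mk (Dmat t)

noncomputable def moeb (G : SL2R) (z : ℂ) : ℂ :=
  ((G 0 0 : ℝ) * z + (G 0 1 : ℝ)) / ((G 1 0 : ℝ) * z + (G 1 1 : ℝ))

noncomputable def moebP (g : PSL2R) : ℂ → ℂ := moeb (Quotient.out g)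

def H2 : Set ℂ := {z | 0 < z.im}

def IsFundDomH2 (Γ : Subgroup PSL2R) (F : Set ℂ) : Prop :=
  F.Nonempty ∧ F ⊆ H2 ∧ IsOpen F ∧
  (⋃ γ ∈ Γ, moebP γ '' (closure F ∩ H2)) = H2 ∧
  ∀ γ ∈ Γ, γ ≠ 1 → (moebP γ '' F) ∩ F = ∅

def IsFundDomPSL (Γ : Subgroup PSL2R) (F : Set PSL2R) : Prop :=
  F.Nonempty ∧ IsOpen F ∧
  (⋃ γ ∈ Γ, (fun g => γ * g) '' closure F) = Set.univ ∧
  ∀ γ ∈ Γ, γ ≠ 1 → ((fun g => γ * g) '' F) ∩ F = ∅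

def calF (F : Set ℂ) : Set PSL2R :=
  {g | ∃ x y θ : ℝ, (x + y * Complex.I) ∈ F ∧ θ ∈ Set.Ico 0 (2 * Real.pi) ∧
       g = bP x * aP (Real.log y) * dP θ}

noncomputable def PSLZ : Subgroup PSL2R :=
  ((QuotientGroup.mk' (Subgroup.center SL2R)).comp
    (Matrix.SpecialLinearGroup.map (n := Fin 2) (Int.castRingHom ℝ))).range

/-!
`G ↦ G • i` sends `[G]` to `(ac + bd + i) / (c² + d²)`, so the set of the theorem is the preimage
of the open standard fundamental domain `𝒟ᵒ` of `SL(2, ℤ)` in `ℍ`. Disjointness is the fact that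
only `±1` maps a point of `𝒟ᵒ` into `𝒟ᵒ`. For covering, `SL(2, ℤ) • 𝒟 = ℍ` and `𝒟 ⊆ closure 𝒟ᵒ`;
since the orbit map has a continuous section `w ↦ toSL2R w * K` through every point of `SL(2, ℝ)`,
preimages of closures lie in closures of preimages.
-/

open Topology
open scoped MatrixGroups Modular UpperHalfPlane

-- The topology on `SL2R` above is definitionally Mathlib's subtype topology.
instance : IsTopologicalGroup SL2R := Matrix.SpecialLinearGroup.topologicalGroup

instance : ContinuousSMul SL2R ℍ := UpperHalfPlane.instContinuousSMulSL2R

def rowInner (G : SL2R) : ℝ := G 0 0 * G 1 0 + G 0 1 * G 1 1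

def bottomNormSq (G : SL2R) : ℝ := G 1 0 ^ 2 + G 1 1 ^ 2

lemma det_entries_eq_one (G : SL2R) : G 0 0 * G 1 1 - G 0 1 * G 1 0 = 1 := by
  rw [← Matrix.det_fin_two, G.det_coe]

lemma bottomNormSq_pos (G : SL2R) : 0 < bottomNormSq G := by
  have hdet := det_entries_eq_one G
  unfold bottomNormSq
  by_contra! h
  have h10 : G 1 0 = 0 := by nlinarith [sq_nonneg (G 1 0), sq_nonneg (G 1 1)]
  have h11 : G 1 1 = 0 := by nlinarith [sq_nonneg (G 1 0), sq_nonneg (G 1 1)]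
  simp [h10, h11] at hdet

lemma coe_smul_I (G : SL2R) :
    ((G • UpperHalfPlane.I : ℍ) : ℂ) = (rowInner G + Complex.I) / bottomNormSq G := by
  have hden : (G 1 0 : ℂ) * Complex.I + G 1 1 ≠ 0 := UpperHalfPlane.denom_ne_zero G UpperHalfPlane.I
  have hv : (bottomNormSq G : ℂ) ≠ 0 := mod_cast (bottomNormSq_pos G).ne'
  have hdet : (G 0 0 * G 1 1 - G 0 1 * G 1 0 : ℂ) = 1 := mod_cast det_entries_eq_one G
  rw [UpperHalfPlane.coe_specialLinearGroup_apply]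
  simp only [Algebra.algebraMap_self, RingHom.id_apply, UpperHalfPlane.coe_I]
  rw [div_eq_div_iff hden hv, rowInner, bottomNormSq]
  push_cast
  linear_combination (G 1 1 * Complex.I - G 1 0) * hdet - G 1 0 * Complex.I_sq

lemma smul_I_mem_fdo_iff (G : SL2R) : G • UpperHalfPlane.I ∈ 𝒟ᵒ ↔
    2 * |rowInner G| < bottomNormSq G ∧ rowInner G ^ 2 + 1 > bottomNormSq G ^ 2 := by
  have hv := bottomNormSq_pos G
  have hre : (G • UpperHalfPlane.I).re = rowInner G / bottomNormSq G := by
    rw [← UpperHalfPlane.coe_re, coe_smul_I, Complex.div_ofReal_re, Complex.add_re,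
      Complex.ofReal_re, Complex.I_re, add_zero]
  have hnormSq : Complex.normSq (G • UpperHalfPlane.I : ℍ) =
      (rowInner G ^ 2 + 1) / bottomNormSq G ^ 2 := by
    have : Complex.normSq (rowInner G + Complex.I) = rowInner G ^ 2 + 1 := by
      simpa using Complex.normSq_add_mul_I (rowInner G) 1
    rw [coe_smul_I, Complex.normSq_div, Complex.normSq_ofReal, this, sq (bottomNormSq G)]
  rw [ModularGroup.fdo, Set.mem_ofPred_eq, hre, hnormSq, one_lt_div (by positivity), abs_div,
    abs_of_pos hv, div_lt_iff₀ hv, and_comm]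
  constructor <;> rintro ⟨h₁, h₂⟩ <;> constructor <;> linarith

lemma smul_eq_self_of_mem_center {C : SL2R} (hC : C ∈ Subgroup.center SL2R) (z : ℍ) :
    C • z = z := by
  obtain ⟨r, hr, hrC⟩ := Matrix.SpecialLinearGroup.mem_center_iff.mp hC
  have hr0 : (r : ℂ) ≠ 0 := by
    rintro h
    simp_all
  ext1
  simp [UpperHalfPlane.coe_specialLinearGroup_apply, ← hrC, hr0]

lemma smul_eq_smul_of_mk_eq {G H : SL2R} (h : (G : PSL2R) = H) (z : ℍ) : G • z = H • z := by
  rw [← mul_inv_cancel_left G H, mul_smul, smul_eq_self_of_mem_center (QuotientGroup.eq.mp h)]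

lemma map_intCastRingHom_smul (γ : SL(2, ℤ)) (z : ℍ) :
    Matrix.SpecialLinearGroup.map (Int.castRingHom ℝ) γ • z = γ • z := by
  rw [ModularGroup.sl_moeb, MulAction.compHom_smul_def]
  rfl

lemma fd_subset_closure_fdo : 𝒟 ⊆ closure 𝒟ᵒ := by
  rintro z ⟨hnorm, hre⟩
  rw [Complex.normSq_apply, UpperHalfPlane.coe_re, UpperHalfPlane.coe_im] at hnorm
  rw [UpperHalfPlane.isEmbedding_coe.closure_eq_preimage_closure_image, Set.mem_preimage]
  -- Moving towards `z` along `w`, `|re|` is smaller and `im` larger than at `z`.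
  let w : ℝ → ℂ := fun t => ⟨t * z.re, (2 - t) * z.im⟩
  have hw : Continuous w :=
    Complex.equivRealProdCLM.symm.continuous.comp (f := fun t => (t * z.re, (2 - t) * z.im))
      (by fun_prop)
  have hw1 : w 1 = z := Complex.ext (one_mul _) (by norm_num [w])
  refine mem_closure_of_tendsto (b := 𝓝[<] (1 : ℝ))
    (hw1 ▸ (hw.tendsto 1).mono_left nhdsWithin_le_nhds) ?_
  filter_upwards [Ioo_mem_nhdsLT one_pos] with t ⟨ht0, ht1⟩
  have him : 0 < (w t).im := mul_pos (by linarith) z.im_pos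
  refine ⟨⟨w t, him⟩, ⟨?_, ?_⟩, rfl⟩
  · have hre2 : z.re ^ 2 ≤ 1 / 4 := by nlinarith [abs_nonneg z.re, sq_abs z.re]
    show 1 < Complex.normSq ⟨t * z.re, (2 - t) * z.im⟩
    have hgap : 0 < (3 - t) * z.im ^ 2 - (1 + t) * z.re ^ 2 := by nlinarith
    rw [Complex.normSq_mk]
    nlinarith [mul_pos (sub_pos.2 ht1) hgap]
  · show |t * z.re| < 1 / 2
    rw [abs_mul, abs_of_pos ht0]
    nlinarith [abs_nonneg z.re]

lemma mem_closure_preimage_of_continuous_section {X Y : Type*} [TopologicalSpace X]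
    [TopologicalSpace Y] {π : X → Y} {S : Set Y} {x : X} {σ : Y → X} (hσ : Continuous σ)
    (hπσ : ∀ y, π (σ y) = y) (hσx : σ (π x) = x) (hx : π x ∈ closure S) :
    x ∈ closure (π ⁻¹' S) :=
  hσx ▸ map_mem_closure hσ hx fun y hy => by rwa [Set.mem_preimage, hπσ]

lemma mem_closure_preimage_smul_I {S : Set ℍ} {G : SL2R} (hG : G • UpperHalfPlane.I ∈ closure S) :
    G ∈ closure ((· • UpperHalfPlane.I) ⁻¹' S) := by
  set K := (G • UpperHalfPlane.I).toSL2R⁻¹ * G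
  have hK : K • UpperHalfPlane.I = UpperHalfPlane.I := by
    rw [mul_smul, inv_smul_eq_iff, UpperHalfPlane.toSL2R_smul_I]
  refine mem_closure_preimage_of_continuous_section (σ := fun z => z.toSL2R * K)
    (UpperHalfPlane.continuous_toSL2R.mul continuous_const) (fun z => ?_) (by simp [K]) hG
  rw [mul_smul, hK, UpperHalfPlane.toSL2R_smul_I]

def fdoLift : Set PSL2R := QuotientGroup.mk '' {G : SL2R | G • UpperHalfPlane.I ∈ 𝒟ᵒ}

lemma iUnion_smul_closure_fdoLift_eq_univ :
    (⋃ γ ∈ PSLZ, (fun g => γ * g) '' closure fdoLift) = Set.univ := by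
  refine Set.eq_univ_of_forall fun g => ?_
  obtain ⟨G, rfl⟩ := QuotientGroup.mk_surjective g
  obtain ⟨γ, hγ⟩ := ModularGroup.exists_smul_mem_fd (G • UpperHalfPlane.I)
  set Γ := Matrix.SpecialLinearGroup.map (Int.castRingHom ℝ) γ
  have hΓG : Γ * G ∈ closure {G : SL2R | G • UpperHalfPlane.I ∈ 𝒟ᵒ} := by
    refine mem_closure_preimage_smul_I (fd_subset_closure_fdo ?_)
    rwa [mul_smul, map_intCastRingHom_smul]
  refine Set.mem_iUnion₂.mpr ⟨(Γ : PSL2R)⁻¹, inv_mem ⟨γ, rfl⟩, Γ * G,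
    image_closure_subset_closure_image continuous_quot_mk ⟨_, hΓG, rfl⟩, ?_⟩
  simp

lemma smul_fdoLift_inter_fdoLift_eq_empty {γ : PSL2R} (hγ : γ ∈ PSLZ) (hγ1 : γ ≠ 1) :
    (fun g => γ * g) '' fdoLift ∩ fdoLift = ∅ := by
  obtain ⟨γ, rfl⟩ := hγ
  refine Set.eq_empty_of_forall_notMem ?_
  rintro _ ⟨⟨_, ⟨G, hG, rfl⟩, rfl⟩, ⟨H, hH, hHG⟩⟩
  have hγG : γ • G • UpperHalfPlane.I ∈ 𝒟ᵒ := by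
    rwa [← map_intCastRingHom_smul, ← mul_smul, ← smul_eq_smul_of_mk_eq hHG]
  rcases ModularGroup.eq_one_or_neg_one_of_mem_fdo_mem_fdo hG hγG with rfl | rfl
  · exact hγ1 (by simp)
  · refine hγ1 (QuotientGroup.eq_one_iff _ |>.mpr ?_)
    simpa using Subgroup.mem_center_iff.mpr fun g : SL2R =>
      (mul_neg_one g).trans (neg_one_mul g).symm

lemma setOf_eq_fdoLift :
    {g : PSL2R | ∃ G : SL2R, g = QuotientGroup.mk G ∧
      2 * |rowInner G| < bottomNormSq G ∧ rowInner G ^ 2 + 1 > bottomNormSq G ^ 2} = fdoLift := by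
  ext g
  simp only [fdoLift, Set.mem_image, Set.mem_ofPred_eq, smul_I_mem_fdo_iff, eq_comm (a := g)]
  constructor <;> rintro ⟨G, h₁, h₂⟩ <;> exact ⟨G, h₂, h₁⟩

theorem stmt11 :
    IsFundDomPSL PSLZ
      {g : PSL2R | ∃ G : SL2R, g = QuotientGroup.mk G ∧
        2 * |G 0 0 * G 1 0 + G 0 1 * G 1 1| < (G 1 0) ^ 2 + (G 1 1) ^ 2 ∧
        (G 0 0 * G 1 0 + G 0 1 * G 1 1) ^ 2 + 1 > ((G 1 0) ^ 2 + (G 1 1) ^ 2) ^ 2} := by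
  suffices h : IsFundDomPSL PSLZ fdoLift by rwa [← setOf_eq_fdoLift] at h
  let z₀ : ℍ := ⟨2 * Complex.I, by simp⟩
  have hz₀ : z₀ ∈ 𝒟ᵒ := by norm_num [ModularGroup.fdo, z₀, Complex.normSq_apply]
  exact ⟨⟨_, z₀.toSL2R, by simpa using hz₀, rfl⟩,
    QuotientGroup.isOpenMap_coe _ (ModularGroup.isOpen_fdo.preimage (by fun_prop)),
    iUnion_smul_closure_fdoLift_eq_univ, fun _ => smul_fdoLift_inter_fdoLift_eq_empty⟩
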